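/- For every d ≥ 4, the bipartite graph K'' with parts A = {a_1,...,a_d}, B = {b_1,...,b_d} and edge set E = {(a_i,b_j) : i > j} ∪ {(a_i,b_j) : i ≤ 3} is not realizable as a faithful unit distance graph in R^d; consequently there exists a bipartite graph with exactly C(d+3,2) - 6 edges that is not a faithful distance graph in R^d. -/

import Mathlib

/-!
Lift `p ↦ (p, ‖p‖², 1)` into `E × ℝ × ℝ` and pair lifts by the symmetric nondegenerate form `Q`
with `Q (lift a) (lift p) = ‖a - p‖² - 1`, so that unit distance becomes `Q`-orthogonality. The
lifts of three distinct points are linearly independent, since the matrix of squared distances of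
three distinct points is nonsingular. In a faithful realization of `K''` in dimension `d`, the lifts
of `a₁, a₂, a₃` are therefore independent and `Q`-orthogonal to all lifts of the `b_j`. These are
independent as well: those of `b₁, b₂, b₃` are, and for `k > 3` the functional `Q (lift a_k)` kills
the lift of every `b_j` with `j < k` but not that of `b_k`, as `a_k b_k` is not an edge. By
nondegeneracy, `d + 3 ≤ dim (E × ℝ × ℝ) = d + 2`. The edge count is `3d + (3 + 4 + ⋯ + (d - 1))`.
-/

/-- The bipartite graph `K''` with parts `A = {a_1,…,a_d}` (left) and `B = {b_1,…,b_d}` (right),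
where `a_i` is adjacent to `b_j` iff `i > j` or `i ≤ 3` (1-based indexing; here 0-based:
`i.val > j.val ∨ i.val ≤ 2`). -/
def Kpp (d : ℕ) : SimpleGraph (Fin d ⊕ Fin d) :=
  SimpleGraph.fromRel (fun u v =>
    match u, v with
    | Sum.inl i, Sum.inr j => j.val < i.val ∨ i.val ≤ 2
    | _, _ => False)

open Finset Module RealInnerProductSpace

section Triangular

variable {K V : Type*} [Field K] [AddCommGroup V] [Module K V]

theorem linearIndependent_of_triangular {n m : ℕ} (hmn : m ≤ n) {u : Fin n → V}
    (φ : Fin n → Dual K V) (h₀ : LinearIndependent K (u ∘ Fin.castLE hmn))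
    (hφ : ∀ k j : Fin n, m ≤ k → j < k → φ k (u j) = 0)
    (hφu : ∀ k : Fin n, m ≤ k → φ k (u k) ≠ 0) : LinearIndependent K u := by
  rw [Fintype.linearIndependent_iff] at h₀ ⊢
  intro g hg
  have htop : ∀ k : Fin n, m ≤ k → g k = 0 := by
    by_contra! hne
    classical
    obtain ⟨k, hkS, hmax⟩ := (univ.filter fun k : Fin n => m ≤ k ∧ g k ≠ 0).exists_max_image id
      (by obtain ⟨k, hk⟩ := hne; exact ⟨k, by simpa using hk⟩)
    simp only [mem_filter, mem_univ, true_and, id] at hkS hmax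
    obtain ⟨hmk, hgk⟩ := hkS
    have hzero : g k * φ k (u k) = 0 := by
      have := congrArg (φ k) hg
      rw [map_sum, map_zero, sum_eq_single k] at this
      · simpa using this
      · intro j _ hjk
        rcases hjk.lt_or_gt with hj | hj
        · simp [hφ k j hmk hj]
        · have : g j = 0 := by_contra fun h => (hmax j ⟨by omega, h⟩).not_gt hj
          simp [this]
      · simp
    exact mul_ne_zero hgk (hφu k hmk) hzero
  have hbase := h₀ (g ∘ Fin.castLE hmn) <| by
    rw [← hg]
    refine Fintype.sum_of_injective _ (Fin.castLE_injective hmn) _ _ (fun j hj => ?_) (fun _ => rfl)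
    rw [htop j (not_lt.mp fun h => hj ⟨⟨j, h⟩, rfl⟩), zero_smul]
  intro j
  rcases lt_or_ge (j : ℕ) m with h | h
  · exact hbase ⟨j, h⟩
  · exact htop j h

end Triangular

section Orthogonal

variable {K V ι κ : Type*} [Field K] [AddCommGroup V] [Module K V] [FiniteDimensional K V]
  [Fintype ι] [Fintype κ]

theorem card_add_card_le_finrank_of_isOrtho {B : LinearMap.BilinForm K V} (hB : B.Nondegenerate)
    {w : κ → V} {u : ι → V} (hw : LinearIndependent K w) (hu : LinearIndependent K u)
    (hwu : ∀ k i, B (w k) (u i) = 0) : Fintype.card ι + Fintype.card κ ≤ finrank K V := by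
  have hle : Submodule.span K (Set.range u) ≤ B.orthogonal (Submodule.span K (Set.range w)) := by
    rw [Submodule.span_le]
    rintro _ ⟨i, rfl⟩
    have hker : Submodule.span K (Set.range w) ≤ LinearMap.ker (B.flip (u i)) :=
      Submodule.span_le.mpr <| by rintro _ ⟨k, rfl⟩; exact hwu k i
    exact fun n hn => hker hn
  have hdim := Submodule.finrank_mono hle
  rw [finrank_span_eq_card hu, LinearMap.BilinForm.finrank_orthogonal hB,
    finrank_span_eq_card hw] at hdim
  have hκ := hw.fintype_card_le_finrank
  omega

end Orthogonal

section Paraboloid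

variable {E : Type*} [NormedAddCommGroup E] [InnerProductSpace ℝ E]

def paraboloidLift (p : E) : E × ℝ × ℝ := (p, ‖p‖ ^ 2, 1)

noncomputable def unitSphereForm : LinearMap.BilinForm ℝ (E × ℝ × ℝ) :=
  LinearMap.mk₂ ℝ (fun v w => v.2.2 * w.2.1 + v.2.1 * w.2.2 - v.2.2 * w.2.2 - 2 * ⟪v.1, w.1⟫)
    (fun _ _ _ => by simp only [Prod.fst_add, Prod.snd_add, inner_add_left]; ring)
    (fun _ _ _ => by
      simp only [Prod.smul_fst, Prod.smul_snd, smul_eq_mul, real_inner_smul_left]; ring)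
    (fun _ _ _ => by simp only [Prod.fst_add, Prod.snd_add, inner_add_right]; ring)
    (fun _ _ _ => by
      simp only [Prod.smul_fst, Prod.smul_snd, smul_eq_mul, real_inner_smul_right]; ring)

theorem unitSphereForm_apply (v w : E × ℝ × ℝ) :
    unitSphereForm v w = v.2.2 * w.2.1 + v.2.1 * w.2.2 - v.2.2 * w.2.2 - 2 * ⟪v.1, w.1⟫ := rfl

theorem unitSphereForm_lift (a p : E) :
    unitSphereForm (paraboloidLift a) (paraboloidLift p) = ‖a - p‖ ^ 2 - 1 := by
  rw [unitSphereForm_apply, paraboloidLift, paraboloidLift, norm_sub_sq_real]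
  ring

theorem unitSphereForm_comm (v w : E × ℝ × ℝ) : unitSphereForm v w = unitSphereForm w v := by
  rw [unitSphereForm_apply, unitSphereForm_apply, real_inner_comm]
  ring

theorem unitSphereForm_nondegenerate :
    (unitSphereForm : LinearMap.BilinForm ℝ (E × ℝ × ℝ)).Nondegenerate := by
  refine (LinearMap.IsRefl.nondegenerate_iff_separatingLeft
    fun v w h => (unitSphereForm_comm w v).trans h).mpr ?_
  rintro ⟨x, s, t⟩ h
  have ht : t = 0 := by simpa [unitSphereForm_apply] using h (0, 1, 0)
  have hs : s = 0 := by simpa [unitSphereForm_apply, ht] using h (0, 0, 1)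
  have hx : x = 0 := by simpa [unitSphereForm_apply, ht, hs] using h (x, 0, 0)
  simp [hx, hs, ht]

-- The matrix `!![0, a, b; a, 0, c; b, c, 0]` has determinant `2abc ≠ 0`.
theorem eq_zero_of_offDiag_pos_system {a b c x y z : ℝ} (ha : 0 < a) (hb : 0 < b) (hc : 0 < c)
    (h₀ : y * a + z * b = 0) (h₁ : x * a + z * c = 0) (h₂ : x * b + y * c = 0) :
    x = 0 ∧ y = 0 ∧ z = 0 := by
  have hz : z = 0 := by
    have : z * (2 * b * c) = 0 := by linear_combination c * h₀ + b * h₁ - a * h₂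
    simpa [hb.ne', hc.ne'] using this
  subst hz
  refine ⟨?_, ?_, rfl⟩ <;> nlinarith

theorem linearIndependent_paraboloidLift {P : Fin 3 → E} (hP : Function.Injective P) :
    LinearIndependent ℝ (paraboloidLift ∘ P) := by
  rw [Fintype.linearIndependent_iff]
  intro c hc
  have hsum : ∑ i, c i = 0 := by simpa [paraboloidLift, Prod.snd_sum] using congrArg (·.2.2) hc
  have hdist : ∀ x, ∑ i, c i * ‖x - P i‖ ^ 2 = 0 := fun x => by
    have := congrArg (unitSphereForm (paraboloidLift x)) hc
    simp only [map_sum, map_smul, Function.comp_apply, unitSphereForm_lift, map_zero,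
      smul_eq_mul, mul_sub, mul_one, sum_sub_distrib, hsum] at this
    linarith
  have hpos : ∀ i j, i ≠ j → 0 < ‖P i - P j‖ ^ 2 := fun i j hij =>
    pow_pos (norm_pos_iff.mpr (sub_ne_zero.mpr (hP.ne hij))) 2
  have h₀ := hdist (P 0)
  have h₁ := hdist (P 1)
  have h₂ := hdist (P 2)
  simp only [Fin.sum_univ_three, sub_self, norm_zero, norm_sub_rev (P 1) (P 0),
    norm_sub_rev (P 2) (P 0), norm_sub_rev (P 2) (P 1), ne_eq, OfNat.ofNat_ne_zero,
    not_false_eq_true, zero_pow, mul_zero, zero_add, add_zero] at h₀ h₁ h₂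
  obtain ⟨h0, h1, h2⟩ := eq_zero_of_offDiag_pos_system (hpos 0 1 (by decide)) (hpos 0 2 (by decide))
    (hpos 1 2 (by decide)) h₀ h₁ h₂
  intro i
  fin_cases i <;> assumption

theorem unitSphereForm_lift_eq_zero_iff (a p : E) :
    unitSphereForm (paraboloidLift a) (paraboloidLift p) = 0 ↔ dist a p = 1 := by
  rw [unitSphereForm_lift, sub_eq_zero, dist_eq_norm, pow_eq_one_iff_of_nonneg (norm_nonneg _)
    two_ne_zero]

end Paraboloid

theorem Kpp_adj_inl_inr {d : ℕ} {i j : Fin d} :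
    (Kpp d).Adj (.inl i) (.inr j) ↔ j.val < i.val ∨ i.val ≤ 2 := by
  simp [Kpp]

theorem edgeSet_Kpp (d : ℕ) :
    (Kpp d).edgeSet = (fun p : Fin d × Fin d ↦ s(.inl p.1, .inr p.2)) ''
      {p | p.2.val < p.1.val ∨ p.1.val ≤ 2} := by
  refine Set.ext <| Sym2.ind fun u v ↦ ?_
  rcases u with i | i <;> rcases v with j | j <;> simp [Kpp]

theorem card_filter_lt_or_le_two {d : ℕ} (i : Fin d) :
    #{j : Fin d | j.val < i.val ∨ i.val ≤ 2} = if i.val ≤ 2 then d else i.val := by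
  split_ifs with hi
  · simp [hi]
  · simp only [hi, or_false]
    rw [Fin.card_filter_val_lt]
    omega

theorem Nat.succ_choose_two (n : ℕ) : (n + 1).choose 2 = n + n.choose 2 := by
  rw [Nat.choose_succ_succ', Nat.choose_one_right]

theorem sum_range_ite_le_two_add_three (d : ℕ) {n : ℕ} (hn : 3 ≤ n) :
    ∑ i ∈ range n, (if i ≤ 2 then d else i) + 3 = 3 * d + n.choose 2 := by
  induction n, hn using Nat.le_induction with
  | base => simp [sum_range_succ]; ring
  | succ n hn ih =>
    rw [sum_range_succ, if_neg (by omega), Nat.succ_choose_two]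
    omega

theorem card_edgeSet_Kpp {d : ℕ} (hd : 3 ≤ d) :
    Nat.card (Kpp d).edgeSet = Nat.choose (d + 3) 2 - 6 := by
  have hinj : Function.Injective fun p : Fin d × Fin d ↦ s(Sum.inl p.1, Sum.inr p.2) := by
    rintro ⟨i, j⟩ ⟨i', j'⟩ h
    simpa using h
  rw [edgeSet_Kpp, Nat.card_image_of_injective hinj, Nat.card_eq_fintype_card,
    Fintype.card_subtype, card_filter, Fintype.sum_prod_type]
  simp only [Set.mem_ofPred_eq, ← card_filter, card_filter_lt_or_le_two]
  rw [Fin.sum_univ_eq_sum_range (fun i => if i ≤ 2 then d else i)]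
  have := sum_range_ite_le_two_add_three d hd
  rw [Nat.succ_choose_two, Nat.succ_choose_two, Nat.succ_choose_two]
  omega

def IsFaithfulUnitDistanceMap {V E : Type*} [Dist E] (G : SimpleGraph V) (f : V → E) :
    Prop :=
  Function.Injective f ∧ ∀ u v, u ≠ v → (G.Adj u v ↔ dist (f u) (f v) = 1)

theorem Kpp_not_isFaithfulUnitDistanceMap {E : Type*} [NormedAddCommGroup E]
    [InnerProductSpace ℝ E] [FiniteDimensional ℝ E] {d : ℕ} (hd : 3 ≤ d) (hE : finrank ℝ E ≤ d)
    (f : Fin d ⊕ Fin d → E) : ¬ IsFaithfulUnitDistanceMap (Kpp d) f := by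
  rintro ⟨hinj, hdist⟩
  set A := f ∘ Sum.inl
  set B := f ∘ Sum.inr
  have hAB : ∀ i j : Fin d, unitSphereForm (paraboloidLift (A i)) (paraboloidLift (B j)) = 0 ↔
      j.val < i.val ∨ i.val ≤ 2 := fun i j => by
    rw [unitSphereForm_lift_eq_zero_iff]
    exact (hdist (.inl i) (.inr j) Sum.inl_ne_inr).symm.trans Kpp_adj_inl_inr
  have hfirstThree : ∀ P : Fin d → E, Function.Injective P →
      LinearIndependent ℝ (paraboloidLift ∘ P ∘ Fin.castLE hd) := fun P hP =>
    linearIndependent_paraboloidLift (hP.comp (Fin.castLE_injective hd))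
  have hA := hfirstThree A (hinj.comp Sum.inl_injective)
  have hB : LinearIndependent ℝ (paraboloidLift ∘ B) :=
    linearIndependent_of_triangular hd (fun k => unitSphereForm (paraboloidLift (A k)))
      (hfirstThree B (hinj.comp Sum.inr_injective))
      (fun k j _ hjk => (hAB k j).mpr (Or.inl hjk))
      (fun k hk => by rw [Function.comp_apply, Ne, hAB]; omega)
  have hcard := card_add_card_le_finrank_of_isOrtho unitSphereForm_nondegenerate hA hB
    (fun i j => (hAB _ j).mpr (Or.inr (by simp only [Fin.val_castLE]; omega)))
  simp only [Fintype.card_fin, Module.finrank_prod, Module.finrank_self] at hcard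
  omega

/-- for `d ≥ 4`, the bipartite graph `K''` is not realizable as a faithful
unit distance graph in `ℝ^d`; moreover it has exactly `C(d+3,2) - 6` edges, so there is a
bipartite graph with `C(d+3,2) - 6` edges which is not a faithful distance graph in `ℝ^d`. -/
theorem stmt_3 (d : ℕ) (hd : 4 ≤ d) :
    (¬ ∃ f : (Fin d ⊕ Fin d) → EuclideanSpace ℝ (Fin d), Function.Injective f ∧
        ∀ u v, u ≠ v → ((Kpp d).Adj u v ↔ dist (f u) (f v) = 1)) ∧
    Nat.card (Kpp d).edgeSet = Nat.choose (d + 3) 2 - 6 :=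
  ⟨fun ⟨f, hf⟩ => Kpp_not_isFaithfulUnitDistanceMap (by omega) (finrank_euclideanSpace_fin.le) f hf,
    card_edgeSet_Kpp (by omega)⟩
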